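/- Let 𝕊 be a quantum system with structured states over a finite set N of locations, ↝ a policy, (read, alter) an access control matrix satisfying ↝, and ε ≥ 0. Suppose that for all agents b ∈ A, commands c ∈ C, reachable density operators ρ, σ, and all K ⊆ N, (RM2) if Dis(ρ, 𝓔_{b,c}(ρ) | ε, K) or Dis(σ, 𝓔_{b,c}(σ) | ε, K) then ¬Dis(𝓔_{b,c}(ρ), 𝓔_{b,c}(σ) | δ_b(ρ,σ), K), and (RM3) if Dis(ρ, 𝓔_{b,c}(ρ) | ε, K) then there exists L ∈ alter(b) with K ∩ L ≠ ∅. Then for all a, b ∈ A, c ∈ C and reachable ρ, σ: δ_a(𝓔_{b,c}(ρ), 𝓔_{b,c}(σ)) ≤ δ_a(ρ,σ) + 2ε. -/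

import Mathlib

open scoped Classical ComplexOrder
open Matrix Kronecker

noncomputable section

/-- A density operator: positive semidefinite with trace 1. -/
def IsDensity {d : Type} [Fintype d] [DecidableEq d] (ρ : Matrix d d ℂ) : Prop :=
  ρ.PosSemidef ∧ ρ.trace = 1

/-- A super-operator: a linear, positive, trace-preserving map on matrices. -/
def IsSuperOp {d : Type} [Fintype d] [DecidableEq d]
    (F : Matrix d d ℂ → Matrix d d ℂ) : Prop :=
  IsLinearMap ℂ F ∧ (∀ ρ : Matrix d d ℂ, ρ.PosSemidef → (F ρ).PosSemidef) ∧
    (∀ ρ : Matrix d d ℂ, (F ρ).trace = ρ.trace)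

/-- A finite family of matrices (the data of a measurement). -/
structure PMeas (d : Type) where
  m : ℕ
  E : Fin m → Matrix d d ℂ

/-- The family is a POVM: positive semidefinite elements summing to the identity. -/
def PMeas.IsPOVM {d : Type} [Fintype d] [DecidableEq d] (P : PMeas d) : Prop :=
  (∀ i, (P.E i).PosSemidef) ∧ ∑ i, P.E i = 1

/-- The distance between outcome distributions of a measurement on two states. -/
def dE {d : Type} [Fintype d] (P : PMeas d) (ρ σ : Matrix d d ℂ) : ℝ :=
  (1 / 2) * ∑ i, ‖(P.E i * ρ).trace - (P.E i * σ).trace‖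

/-- The measurement pseudo-distance induced by a set of measurements. -/
def dM {d : Type} [Fintype d] (M : Set (PMeas d)) (ρ σ : Matrix d d ℂ) : ℝ :=
  sSup { x | ∃ P ∈ M, x = dE P ρ σ }

/-- A quantum system: initial state, agents, commands, super-operators, measurements. -/
structure QSystem (Agent Cmd d : Type) where
  ρ0 : Matrix d d ℂ
  A : Set Agent
  C : Set Cmd
  Ecmd : Agent → Cmd → Matrix d d ℂ → Matrix d d ℂ
  M : Agent → Set (PMeas d)

/-- Well-formedness: the initial state is a density operator, commands act as
super-operators, and agents measure with POVMs. -/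
def QSystem.WellFormed {Agent Cmd d : Type} [Fintype d] [DecidableEq d]
    (S : QSystem Agent Cmd d) : Prop :=
  IsDensity S.ρ0 ∧ (∀ a ∈ S.A, ∀ c ∈ S.C, IsSuperOp (S.Ecmd a c)) ∧
    (∀ a ∈ S.A, ∀ P ∈ S.M a, P.IsPOVM)

/-- Execution of a finite action sequence (composition of super-operators, in order). -/
def QSystem.run {Agent Cmd d : Type} (S : QSystem Agent Cmd d)
    (α : List (Agent × Cmd)) (ρ : Matrix d d ℂ) : Matrix d d ℂ :=
  α.foldl (fun τ p => S.Ecmd p.1 p.2 τ) ρ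

/-- A sequence over A × C. -/
def QSystem.Valid {Agent Cmd d : Type} (S : QSystem Agent Cmd d)
    (α : List (Agent × Cmd)) : Prop :=
  ∀ p ∈ α, p.1 ∈ S.A ∧ p.2 ∈ S.C

/-- `purge G D α` deletes from `α` every pair `(a, c)` with `a ∈ G` and `c ∈ D`. -/
def purge {Agent Cmd : Type} (G : Set Agent) (D : Set Cmd) :
    List (Agent × Cmd) → List (Agent × Cmd)
  | [] => []
  | p :: rest => if p.1 ∈ G ∧ p.2 ∈ D then purge G D rest else p :: purge G D rest

/-- A reachable density operator. -/
def QSystem.Reachable {Agent Cmd d : Type} (S : QSystem Agent Cmd d)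
    (ρ : Matrix d d ℂ) : Prop :=
  ∃ α, S.Valid α ∧ S.run α S.ρ0 = ρ

/-- `∇ a`: the set of agents from which information may not flow to `a`. -/
def nabla {Agent : Type} (pol : Agent → Agent → Prop) (a : Agent) : Set Agent :=
  { b | ¬ pol b a }

/-- The security degree `K(𝕊,↝)`. -/
def Kdeg {Agent Cmd d : Type} [Fintype d] (S : QSystem Agent Cmd d)
    (pol : Agent → Agent → Prop) : ℝ :=
  sSup { x | ∃ a ∈ S.A, ∃ α, S.Valid α ∧
    x = dM (S.M a) (S.run α S.ρ0) (S.run (purge (nabla pol a) Set.univ α) S.ρ0) }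

/-- The `t`-bounded security degree `K_t(𝕊,↝)`. -/
def Kt {Agent Cmd d : Type} [Fintype d] (S : QSystem Agent Cmd d)
    (pol : Agent → Agent → Prop) (t : ℕ) : ℝ :=
  sSup { x | ∃ a ∈ S.A, ∃ α, S.Valid α ∧ α.length ≤ t ∧
    x = dM (S.M a) (S.run α S.ρ0) (S.run (purge (nabla pol a) Set.univ α) S.ρ0) }

/-- The interference degree `Int(G₁, D | G₂)`. -/
def IntDeg {Agent Cmd d : Type} [Fintype d] (S : QSystem Agent Cmd d)
    (G1 : Set Agent) (D : Set Cmd) (G2 : Set Agent) : ℝ :=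
  sSup { x | ∃ a ∈ G2, ∃ α, S.Valid α ∧
    x = dM (S.M a) (S.run α S.ρ0) (S.run (purge G1 D α) S.ρ0) }

/-- Trace distance `d(ρ,σ) = (1/2)·tr √((ρ−σ)†(ρ−σ))`. -/
def traceDist {d : Type} [Fintype d] [DecidableEq d] (ρ σ : Matrix d d ℂ) : ℝ :=
  (1 / 2) * (((Matrix.posSemidef_conjTranspose_mul_self (ρ - σ)).1.eigenvectorUnitary.1 *
    Matrix.diagonal (((↑) : ℝ → ℂ) ∘ Real.sqrt ∘ (Matrix.posSemidef_conjTranspose_mul_self (ρ - σ)).1.eigenvalues) *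
    (star (Matrix.posSemidef_conjTranspose_mul_self (ρ - σ)).1.eigenvectorUnitary.1 : Matrix d d ℂ)).trace).re

end
noncomputable section

variable {N : Type} [Fintype N] [DecidableEq N] {ι : N → Type}
  [∀ n, Fintype (ι n)] [∀ n, DecidableEq (ι n)]

/-- Glue an assignment on `K` and an assignment on `Kᶜ` into a global assignment. -/
def glue (K : Finset N) (u : (n : K) → ι n.1) (w : (n : (Kᶜ : Finset N)) → ι n.1) :
    (n : N) → ι n :=
  fun n => if h : n ∈ K then u ⟨n, h⟩ else w ⟨n, Finset.mem_compl.mpr h⟩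

/-- Partial trace `tr_{N∖K}`: trace out the locations outside `K`. -/
def ptrOut (K : Finset N) (ρ : Matrix ((n : N) → ι n) ((n : N) → ι n) ℂ) :
    Matrix ((n : K) → ι n.1) ((n : K) → ι n.1) ℂ :=
  Matrix.of fun u v =>
    ∑ w : (n : (Kᶜ : Finset N)) → ι n.1, ρ (glue K u w) (glue K v w)

/-- A below-closed family of sets of locations. -/
def BelowClosed {N : Type} (B : Set (Finset N)) : Prop :=
  ∀ K ∈ B, ∀ L ⊆ K, L ∈ B

/-- The pseudo-distance `δ_a(ρ,σ) = sup_{K ∈ read(a)} d(tr_{N∖K}(ρ), tr_{N∖K}(σ))`. -/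
def deltaRead {Agent : Type} (read : Agent → Set (Finset N)) (a : Agent)
    (ρ σ : Matrix ((n : N) → ι n) ((n : N) → ι n) ℂ) : ℝ :=
  sSup { x | ∃ K ∈ read a, x = traceDist (ptrOut K ρ) (ptrOut K σ) }

/-- `Dis(ρ,σ | ε, K)`: `ρ` and `σ` are `ε`-discriminable on `K`. -/
def Dis (K : Finset N) (ε : ℝ)
    (ρ σ : Matrix ((n : N) → ι n) ((n : N) → ι n) ℂ) : Prop :=
  traceDist (ptrOut K ρ) (ptrOut K σ) > ε

/-- The access control matrix `(read, alter)` satisfies the policy `↝`. -/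
def ACMSatisfies {Agent N : Type} (A : Set Agent) (pol : Agent → Agent → Prop)
    (read alter : Agent → Set (Finset N)) : Prop :=
  (∀ a ∈ A, ∀ b ∈ A, pol a b → read a ⊆ read b) ∧
  (∀ a ∈ A, ∀ b ∈ A, (∃ K ∈ read a, ∃ L ∈ alter b, (K ∩ L).Nonempty) → pol b a)

end

/-!
Fix `K ∈ read a`. If neither `ρ` nor `σ` is moved by more than `ε` on `K`, the triangle
inequality for the trace distance bounds `d_K(𝓔ρ, 𝓔σ)` by `ε + d_K(ρ, σ) + ε`. Otherwise (RM3)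
makes `b` alter a location in `K`, so `b ↝ a` and hence `read b ⊆ read a`, and (RM2) bounds
`d_K(𝓔ρ, 𝓔σ)` by `δ_b(ρ, σ) ≤ δ_a(ρ, σ)`.

The trace distance is half the trace of `|ρ - σ|`, i.e. `½ ∑ |λᵢ(ρ - σ)|` for Hermitian `ρ - σ`.
Its triangle inequality comes from diagonalising `A + B` by a unitary `V`: writing
`A = U D U⋆`, the diagonal of `V A V⋆ = (VU) D (VU)⋆` has `ℓ¹`-norm at most `∑ |λᵢ(A)|`, since
the columns of the unitary `VU` have unit norm.
-/

namespace Matrix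

open scoped MatrixOrder
open Unitary

variable {n : Type} [Fintype n] [DecidableEq n]

lemma traceDist_eq_trace_abs (ρ σ : Matrix n n ℂ) :
    traceDist ρ σ = (1 / 2) * (CFC.abs (ρ - σ)).trace.re := by
  have hA := posSemidef_conjTranspose_mul_self (ρ - σ)
  rw [CFC.abs, star_eq_conjTranspose, CFC.sqrt_eq_cfc, cfc_nnreal_eq_real _ _ hA.nonneg,
    hA.1.cfc_eq]
  simp only [traceDist, IsHermitian.cfc, conjStarAlgAut_apply]
  congr 6
  funext i
  simp only [Function.comp_apply, Real.coe_sqrt, Real.coe_toNNReal',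
    max_eq_left (hA.eigenvalues_nonneg i)]
  rfl

lemma traceDist_nonneg (ρ σ : Matrix n n ℂ) : 0 ≤ traceDist ρ σ := by
  rw [traceDist_eq_trace_abs]
  exact mul_nonneg (by norm_num)
    (Complex.nonneg_iff.mp (CFC.abs_nonneg (ρ - σ)).posSemidef.trace_nonneg).1

lemma traceDist_comm (ρ σ : Matrix n n ℂ) : traceDist ρ σ = traceDist σ ρ := by
  rw [traceDist_eq_trace_abs, traceDist_eq_trace_abs, ← CFC.abs_neg, neg_sub]

lemma IsHermitian.trace_abs {A : Matrix n n ℂ} (hA : A.IsHermitian) :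
    (CFC.abs A).trace.re = ∑ i, |hA.eigenvalues i| := by
  rw [CFC.abs_eq_cfc_norm A hA.isSelfAdjoint, hA.cfc_eq, IsHermitian.cfc,
    conjStarAlgAut_apply, trace_mul_cycle, coe_star_mul_self, one_mul,
    trace_diagonal, Complex.re_sum]
  simp

lemma sum_norm_diag_conjStarAlgAut_diagonal_le (M : unitaryGroup n ℂ) (d : n → ℝ) :
    ∑ j, ‖conjStarAlgAut ℂ _ M (diagonal (RCLike.ofReal ∘ d)) j j‖ ≤ ∑ i, |d i| := by
  have hcol : ∀ i, ∑ j, ‖(M : Matrix n n ℂ) j i‖ ^ 2 = 1 := by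
    intro i
    have h := congrArg Complex.re (congrFun₂ (coe_star_mul_self M) i i)
    simpa [mul_apply, Complex.re_sum, Complex.sq_norm, Complex.normSq_apply] using h
  calc ∑ j, ‖conjStarAlgAut ℂ _ M (diagonal (RCLike.ofReal ∘ d)) j j‖
      ≤ ∑ j, ∑ i, |d i| * ‖(M : Matrix n n ℂ) j i‖ ^ 2 := by
        refine Finset.sum_le_sum fun j _ => ?_
        rw [conjStarAlgAut_apply, mul_apply]
        simp only [mul_diagonal, star_apply]
        refine (norm_sum_le _ _).trans (le_of_eq (Finset.sum_congr rfl fun i _ => ?_))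
        simp only [Function.comp_apply, Complex.coe_algebraMap, RCLike.star_def, Complex.norm_mul,
          Complex.norm_real, Real.norm_eq_abs, RCLike.norm_conj]
        ring
    _ = ∑ i, |d i| := by
        rw [Finset.sum_comm]
        simp [← Finset.mul_sum, hcol]

lemma IsHermitian.sum_norm_diag_conjStarAlgAut_le {A : Matrix n n ℂ} (hA : A.IsHermitian)
    (V : unitaryGroup n ℂ) :
    ∑ j, ‖conjStarAlgAut ℂ _ V A j j‖ ≤ ∑ i, |hA.eigenvalues i| := by
  conv_lhs => rw [hA.spectral_theorem, ← conjStarAlgAut_mul_apply]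
  exact sum_norm_diag_conjStarAlgAut_diagonal_le _ _

lemma IsHermitian.trace_abs_add_le {A B : Matrix n n ℂ} (hA : A.IsHermitian)
    (hB : B.IsHermitian) :
    (CFC.abs (A + B)).trace.re ≤ (CFC.abs A).trace.re + (CFC.abs B).trace.re := by
  have hAB := hA.add hB
  set V := star hAB.eigenvectorUnitary
  rw [hAB.trace_abs, hA.trace_abs, hB.trace_abs]
  calc ∑ i, |hAB.eigenvalues i| = ∑ j, ‖conjStarAlgAut ℂ _ V (A + B) j j‖ := by
        simp [V, hAB.conjStarAlgAut_star_eigenvectorUnitary]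
    _ ≤ ∑ j, (‖conjStarAlgAut ℂ _ V A j j‖ + ‖conjStarAlgAut ℂ _ V B j j‖) :=
        Finset.sum_le_sum fun j _ => by simpa only [map_add, add_apply] using norm_add_le _ _
    _ ≤ _ := by
        rw [Finset.sum_add_distrib]
        exact add_le_add (hA.sum_norm_diag_conjStarAlgAut_le V)
          (hB.sum_norm_diag_conjStarAlgAut_le V)

lemma traceDist_triangle {A B C : Matrix n n ℂ} (hAB : (A - B).IsHermitian)
    (hBC : (B - C).IsHermitian) : traceDist A C ≤ traceDist A B + traceDist B C := by
  simp only [traceDist_eq_trace_abs, ← mul_add]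
  gcongr
  simpa using hAB.trace_abs_add_le hBC

lemma traceDist_le_add_add {A A' B B' : Matrix n n ℂ} (hA : A.IsHermitian)
    (hA' : A'.IsHermitian) (hB : B.IsHermitian) (hB' : B'.IsHermitian) :
    traceDist A' B' ≤ traceDist A A' + traceDist A B + traceDist B B' := by
  have h₁ := traceDist_triangle (hA'.sub hA) (hA.sub hB')
  have h₂ := traceDist_triangle (hA.sub hB) (hB.sub hB')
  rw [traceDist_comm A' A] at h₁
  linarith

end Matrix

namespace QSystem

variable {Agent Cmd d : Type} [Fintype d] [DecidableEq d] {S : QSystem Agent Cmd d}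

lemma WellFormed.posSemidef_ecmd (hS : S.WellFormed) {b : Agent} {c : Cmd} (hb : b ∈ S.A)
    (hc : c ∈ S.C) {ρ : Matrix d d ℂ} (hρ : ρ.PosSemidef) : (S.Ecmd b c ρ).PosSemidef :=
  (hS.2.1 b hb c hc).2.1 ρ hρ

lemma WellFormed.posSemidef_run (hS : S.WellFormed) :
    ∀ {α : List (Agent × Cmd)}, S.Valid α → ∀ {ρ : Matrix d d ℂ}, ρ.PosSemidef →
      (S.run α ρ).PosSemidef
  | [], _, _, hρ => hρ
  | p :: _, hα, _, hρ =>
    hS.posSemidef_run (fun q hq => hα q (.tail p hq))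
      (hS.posSemidef_ecmd (hα p (.head _)).1 (hα p (.head _)).2 hρ)

lemma Reachable.posSemidef (hS : S.WellFormed) {ρ : Matrix d d ℂ} (hρ : S.Reachable ρ) :
    ρ.PosSemidef := by
  obtain ⟨α, hα, rfl⟩ := hρ
  exact hS.posSemidef_run hα hS.1.1

end QSystem

section PartialTrace

variable {N : Type} [Fintype N] [DecidableEq N] {ι : N → Type} [∀ n, Fintype (ι n)]

lemma ptrOut_isHermitian (K : Finset N) {ρ : Matrix ((n : N) → ι n) ((n : N) → ι n) ℂ}
    (hρ : ρ.IsHermitian) : (ptrOut K ρ).IsHermitian := by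
  ext u v
  simp only [conjTranspose_apply, ptrOut, of_apply, star_sum]
  exact Finset.sum_congr rfl fun w _ => by rw [← conjTranspose_apply, hρ.eq]

variable [∀ n, DecidableEq (ι n)] {Agent : Type} {read : Agent → Set (Finset N)} {a b : Agent}
  {ρ σ : Matrix ((n : N) → ι n) ((n : N) → ι n) ℂ}

lemma deltaRead_nonneg : 0 ≤ deltaRead read a ρ σ :=
  Real.sSup_nonneg (by rintro _ ⟨K, -, rfl⟩; exact traceDist_nonneg _ _)

lemma traceDist_ptrOut_le_deltaRead {K : Finset N} (hK : K ∈ read a) :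
    traceDist (ptrOut K ρ) (ptrOut K σ) ≤ deltaRead read a ρ σ :=
  le_csSup ((Set.finite_range fun K : Finset N => traceDist (ptrOut K ρ) (ptrOut K σ)).bddAbove.mono
    (by rintro _ ⟨K, -, rfl⟩; exact ⟨K, rfl⟩)) ⟨K, hK, rfl⟩

lemma deltaRead_le {r : ℝ} (hr : 0 ≤ r)
    (h : ∀ K ∈ read a, traceDist (ptrOut K ρ) (ptrOut K σ) ≤ r) : deltaRead read a ρ σ ≤ r :=
  Real.sSup_le (by rintro _ ⟨K, hK, rfl⟩; exact h K hK) hr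

lemma deltaRead_mono (h : read b ⊆ read a) : deltaRead read b ρ σ ≤ deltaRead read a ρ σ :=
  deltaRead_le deltaRead_nonneg fun _ hK => traceDist_ptrOut_le_deltaRead (h hK)

end PartialTrace

theorem access_control_step_consistency_general {Agent Cmd N : Type} [Fintype N] [DecidableEq N]
    {ι : N → Type} [∀ n, Fintype (ι n)] [∀ n, DecidableEq (ι n)]
    (S : QSystem Agent Cmd ((n : N) → ι n)) (hS : S.WellFormed)
    (pol : Agent → Agent → Prop)
    (read alter : Agent → Set (Finset N))
    (hacm : ACMSatisfies S.A pol read alter)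
    (ε : ℝ) (hε : 0 ≤ ε)
    (RM2 : ∀ b ∈ S.A, ∀ c ∈ S.C, ∀ ρ σ, S.Reachable ρ → S.Reachable σ →
      ∀ K : Finset N,
        (Dis K ε ρ (S.Ecmd b c ρ) ∨ Dis K ε σ (S.Ecmd b c σ)) →
        ¬ Dis K (deltaRead read b ρ σ) (S.Ecmd b c ρ) (S.Ecmd b c σ))
    (RM3 : ∀ b ∈ S.A, ∀ c ∈ S.C, ∀ ρ, S.Reachable ρ → ∀ K : Finset N,
      Dis K ε ρ (S.Ecmd b c ρ) → ∃ L ∈ alter b, (K ∩ L).Nonempty) :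
    ∀ a ∈ S.A, ∀ b ∈ S.A, ∀ c ∈ S.C, ∀ ρ σ, S.Reachable ρ → S.Reachable σ →
      deltaRead read a (S.Ecmd b c ρ) (S.Ecmd b c σ) ≤ deltaRead read a ρ σ + 2 * ε := by
  intro a ha b hb c hc ρ σ hρ hσ
  refine deltaRead_le (add_nonneg deltaRead_nonneg (by linarith)) fun K hK => ?_
  by_cases hdis : Dis K ε ρ (S.Ecmd b c ρ) ∨ Dis K ε σ (S.Ecmd b c σ)
  · obtain ⟨L, hL, hKL⟩ := hdis.elim (RM3 b hb c hc ρ hρ K) (RM3 b hb c hc σ hσ K)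
    -- `ACMSatisfies` intersects finsets with the classical `DecidableEq N` instance.
    have hba : pol b a := hacm.2 a ha b hb ⟨K, hK, L, hL, by convert hKL⟩
    calc _ ≤ deltaRead read b ρ σ := not_lt.mp (RM2 b hb c hc ρ σ hρ hσ K hdis)
      _ ≤ deltaRead read a ρ σ := deltaRead_mono (hacm.1 b hb a ha hba)
      _ ≤ _ := by linarith
  · obtain ⟨hρK, hσK⟩ := not_or.mp hdis
    have hρ₀ := hρ.posSemidef hS
    have hσ₀ := hσ.posSemidef hS
    have herm {τ : Matrix ((n : N) → ι n) ((n : N) → ι n) ℂ} (hτ : τ.PosSemidef) :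
        (ptrOut K τ).IsHermitian := ptrOut_isHermitian K hτ.isHermitian
    calc _ ≤ traceDist (ptrOut K ρ) (ptrOut K (S.Ecmd b c ρ)) +
          traceDist (ptrOut K ρ) (ptrOut K σ) + traceDist (ptrOut K σ) (ptrOut K (S.Ecmd b c σ)) :=
          traceDist_le_add_add (herm hρ₀) (herm (hS.posSemidef_ecmd hb hc hρ₀)) (herm hσ₀)
            (herm (hS.posSemidef_ecmd hb hc hσ₀))
      _ ≤ ε + deltaRead read a ρ σ + ε :=
          add_le_add (add_le_add (not_lt.mp hρK) (traceDist_ptrOut_le_deltaRead hK)) (not_lt.mp hσK)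
      _ = _ := by ring

/-- **Claim 1 in the proof of the access control theorem.** Under (RM2) and (RM3),
`δ_a(𝓔_{b,c}(ρ), 𝓔_{b,c}(σ)) ≤ δ_a(ρ,σ) + 2ε` for all agents `a, b ∈ A`, commands
`c ∈ C` and reachable `ρ, σ`. -/
theorem access_control_step_consistency {Agent Cmd N : Type} [Fintype N] [DecidableEq N]
    {ι : N → Type} [∀ n, Fintype (ι n)] [∀ n, DecidableEq (ι n)]
    [∀ n, Nonempty (ι n)]
    (S : QSystem Agent Cmd ((n : N) → ι n)) (hS : S.WellFormed)
    (pol : Agent → Agent → Prop) (hpol : ∀ a ∈ S.A, pol a a)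
    (read alter : Agent → Set (Finset N))
    (hread : ∀ a ∈ S.A, BelowClosed (read a))
    (halter : ∀ a ∈ S.A, BelowClosed (alter a))
    (hacm : ACMSatisfies S.A pol read alter)
    (ε : ℝ) (hε : 0 ≤ ε)
    (RM2 : ∀ b ∈ S.A, ∀ c ∈ S.C, ∀ ρ σ, S.Reachable ρ → S.Reachable σ →
      ∀ K : Finset N,
        (Dis K ε ρ (S.Ecmd b c ρ) ∨ Dis K ε σ (S.Ecmd b c σ)) →
        ¬ Dis K (deltaRead read b ρ σ) (S.Ecmd b c ρ) (S.Ecmd b c σ))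
    (RM3 : ∀ b ∈ S.A, ∀ c ∈ S.C, ∀ ρ, S.Reachable ρ → ∀ K : Finset N,
      Dis K ε ρ (S.Ecmd b c ρ) → ∃ L ∈ alter b, (K ∩ L).Nonempty) :
    ∀ a ∈ S.A, ∀ b ∈ S.A, ∀ c ∈ S.C, ∀ ρ σ, S.Reachable ρ → S.Reachable σ →
      deltaRead read a (S.Ecmd b c ρ) (S.Ecmd b c σ) ≤ deltaRead read a ρ σ + 2 * ε :=
  access_control_step_consistency_general S hS pol read alter hacm ε hε RM2 RM3
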